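/- arXiv:1704.00541 — 3 statements merged into one kernel-verified Lean document; each statement's English description precedes it below -/
import Mathlib

section
/- Let D be a real L×d matrix whose columns are all nonzero and pairwise non-collinear (no column is a scalar multiple of another column). If S₁, S₂ ∈ {0,1}^{d×R} are selection matrices and Λ is an invertible diagonal R×R matrix such that DS₁ = DS₂Λ, then S₁ = S₂ and Λ is the identity matrix. -/
open Matrix

/-- `S` is a selection matrix: all entries in `{0,1}` and each column has
exactly one nonzero entry. -/
def IsSelectionMatrix {d R : ℕ} (S : Matrix (Fin d) (Fin R) ℝ) : Prop :=
  (∀ i r, S i r = 0 ∨ S i r = 1) ∧ ∀ r, ∃! i, S i r ≠ 0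

lemma sel_col {L d R : ℕ} (D : Matrix (Fin L) (Fin d) ℝ)
    (S : Matrix (Fin d) (Fin R) ℝ) (hS : IsSelectionMatrix S) (r : Fin R) :
    ∃ i, S i r = 1 ∧ (∀ i', i' ≠ i → S i' r = 0) ∧ ∀ l, (D * S) l r = D l i := by
  obtain ⟨i, hi, huniq⟩ := hS.2 r
  have hone : S i r = 1 := (hS.1 i r).resolve_left hi
  have hzero : ∀ i', i' ≠ i → S i' r = 0 := by
    intro i' hi'
    by_contra hne
    exact hi' (huniq i' hne)
  refine ⟨i, hone, hzero, fun l => ?_⟩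
  rw [Matrix.mul_apply, Finset.sum_eq_single i]
  · rw [hone, mul_one]
  · intro b _ hb; rw [hzero b hb, mul_zero]
  · intro hni; exact absurd (Finset.mem_univ i) hni

theorem selection_unique_up_to_scaling {L d R : ℕ}
    (D : Matrix (Fin L) (Fin d) ℝ)
    (hcolnz : ∀ j, (fun l => D l j) ≠ 0)
    (hnoncol : ∀ j j' : Fin d, j ≠ j' → ∀ c : ℝ,
      (fun l => D l j) ≠ c • fun l => D l j')
    (S₁ S₂ : Matrix (Fin d) (Fin R) ℝ)
    (hS₁ : IsSelectionMatrix S₁) (hS₂ : IsSelectionMatrix S₂)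
    (Λ : Matrix (Fin R) (Fin R) ℝ) (hΛdiag : Λ.IsDiag) (hΛunit : IsUnit Λ)
    (h : D * S₁ = D * S₂ * Λ) :
    S₁ = S₂ ∧ Λ = 1 := by
  have key : ∀ r : Fin R, (∀ i, S₁ i r = S₂ i r) ∧ Λ r r = 1 := by
    intro r
    obtain ⟨i₁, h1one, h1z, h1col⟩ := sel_col D S₁ hS₁ r
    obtain ⟨i₂, h2one, h2z, h2col⟩ := sel_col D S₂ hS₂ r
    have heq : ∀ l, D l i₁ = Λ r r * D l i₂ := by
      intro l
      have := congrFun (congrFun h l) r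
      rw [h1col l, Matrix.mul_apply, Finset.sum_eq_single r] at this
      · rw [this, h2col l, mul_comm]
      · intro b _ hb; rw [hΛdiag hb, mul_zero]
      · intro hni; exact absurd (Finset.mem_univ r) hni
    have hii : i₁ = i₂ := by
      by_contra hne
      exact hnoncol i₁ i₂ hne (Λ r r) (funext fun l => heq l)
    subst hii
    have hΛ1 : Λ r r = 1 := by
      obtain ⟨l, hl⟩ := Function.ne_iff.mp (hcolnz i₁)
      have := heq l
      field_simp at this
      rcases mul_eq_mul_right_iff.mp (by linarith [heq l] : Λ r r * D l i₁ = 1 * D l i₁) with h' | h'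
      · exact h'
      · exact absurd h' hl
    refine ⟨fun i => ?_, hΛ1⟩
    by_cases hi : i = i₁
    · subst hi; rw [h1one, h2one]
    · rw [h1z i hi, h2z i hi]
  constructor
  · ext i r; exact (key r).1 i
  · ext a b
    by_cases hab : a = b
    · subst hab; rw [(key a).2, Matrix.one_apply_eq]
    · rw [hΛdiag hab, Matrix.one_apply_ne hab]
end

section
/- Let T be a real K×L×M tensor and let B ∈ ℝ^{L×R} be a fixed matrix of rank R. Then the infimum over A ∈ ℝ^{K×R} and C ∈ ℝ^{M×R} of Σ_{k,l,m} ( T_{klm} − Σ_{r=1}^R A_{kr} B_{lr} C_{mr} )² is attained: there exist A* ∈ ℝ^{K×R} and C* ∈ ℝ^{M×R} achieving the infimum. -/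
open Matrix

/-- The rank-R CPD approximation error with fixed middle factor `B`. -/
noncomputable def cpdError {K L M R : ℕ} (T : Fin K → Fin L → Fin M → ℝ)
    (B : Matrix (Fin L) (Fin R) ℝ) (A : Matrix (Fin K) (Fin R) ℝ)
    (C : Matrix (Fin M) (Fin R) ℝ) : ℝ :=
  ∑ k, ∑ l, ∑ m, (T k l m - ∑ r, A k r * B l r * C m r) ^ 2

open Module

section aux
variable {K L M R : ℕ}

noncomputable abbrev cpdD (K M R : ℕ) := EuclideanSpace ℝ (Fin R × Fin K × Fin M)
noncomputable abbrev cpdE (K L M : ℕ) := EuclideanSpace ℝ (Fin K × Fin L × Fin M)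

noncomputable def cpdL (B : Matrix (Fin L) (Fin R) ℝ) : cpdD K M R →ₗ[ℝ] cpdE K L M where
  toFun X := WithLp.toLp 2 (fun p : Fin K × Fin L × Fin M => ∑ r, B p.2.1 r * X (r, p.1, p.2.2))
  map_add' X Y := by
    ext p
    simp [PiLp.add_apply, mul_add, Finset.sum_add_distrib]
  map_smul' c X := by
    ext p
    simp [PiLp.smul_apply, Finset.mul_sum, smul_eq_mul]
    congr 1; funext r; ring

/-- the set of "tuples of rank ≤ 1 slices" -/
def cpdO (K M R : ℕ) : Set (cpdD K M R) :=
  {X | ∀ r, ∃ (a : Fin K → ℝ) (c : Fin M → ℝ), ∀ k m, X (r, k, m) = a k * c m}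

lemma cpdO_eq : cpdO K M R =
    {X | ∀ r k k' m m', X (r, k, m) * X (r, k', m') = X (r, k, m') * X (r, k', m)} := by
  ext X
  constructor
  · rintro h r k k' m m'
    obtain ⟨a, c, hac⟩ := h r
    simp only [hac]; ring
  · intro h r
    by_cases h0 : ∀ k m, X (r, k, m) = 0
    · exact ⟨0, 0, fun k m => by simp [h0]⟩
    · push_neg at h0
      obtain ⟨k0, m0, h0⟩ := h0
      refine ⟨fun k => X (r, k, m0), fun m => X (r, k0, m) / X (r, k0, m0), fun k m => ?_⟩
      show X (r, k, m) = X (r, k, m0) * (X (r, k0, m) / X (r, k0, m0))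
      rw [mul_div_assoc', eq_div_iff h0]
      have := h r k k0 m m0
      linarith [this]

lemma isClosed_cpdO : IsClosed (cpdO K M R) := by
  rw [cpdO_eq]
  have : {X : cpdD K M R | ∀ r k k' m m',
      X (r, k, m) * X (r, k', m') = X (r, k, m') * X (r, k', m)} =
      ⋂ (r) (k) (k') (m) (m'), {X : cpdD K M R |
      X (r, k, m) * X (r, k', m') = X (r, k, m') * X (r, k', m)} := by
    ext X; simp [Set.mem_iInter]
  rw [this]
  refine isClosed_iInter fun r => isClosed_iInter fun k => isClosed_iInter fun k' =>
    isClosed_iInter fun m => isClosed_iInter fun m' => isClosed_eq ?_ ?_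
  · exact ((EuclideanSpace.proj ((r,k,m) : Fin R × Fin K × Fin M)).continuous).mul
      ((EuclideanSpace.proj ((r,k',m') : Fin R × Fin K × Fin M)).continuous)
  · exact ((EuclideanSpace.proj ((r,k,m') : Fin R × Fin K × Fin M)).continuous).mul
      ((EuclideanSpace.proj ((r,k',m) : Fin R × Fin K × Fin M)).continuous)

lemma cpdL_injective {B : Matrix (Fin L) (Fin R) ℝ} (hB : B.rank = R) :
    Function.Injective (cpdL (K := K) (M := M) B) := by
  have hker : LinearMap.ker B.mulVecLin = ⊥ := by
    have h1 : finrank ℝ (LinearMap.range B.mulVecLin) + finrank ℝ (LinearMap.ker B.mulVecLin)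
        = finrank ℝ (Fin R → ℝ) := LinearMap.finrank_range_add_finrank_ker _
    rw [Module.finrank_pi, Fintype.card_fin] at h1
    have h2 : finrank ℝ (LinearMap.range B.mulVecLin) = R := hB
    have h3 : finrank ℝ (LinearMap.ker B.mulVecLin) = 0 := by omega
    exact Submodule.finrank_eq_zero.mp h3
  have hinj : Function.Injective B.mulVecLin := LinearMap.ker_eq_bot.mp hker
  rw [injective_iff_map_eq_zero]
  intro X hX
  ext p
  obtain ⟨r, k, m⟩ := p
  have h0 : B.mulVecLin (fun r => X (r, k, m)) = 0 := by
    funext l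
    have := congrArg (fun v : cpdE K L M => v (k, l, m)) hX
    simpa [Matrix.mulVecLin_apply, Matrix.mulVec, dotProduct, cpdL] using this
  have := hinj (by rw [h0, map_zero] : B.mulVecLin (fun r => X (r, k, m)) = B.mulVecLin 0)
  simpa using congrFun this r

/-- the lift of a tensor to Euclidean space -/
def cpdT (T : Fin K → Fin L → Fin M → ℝ) : cpdE K L M := WithLp.toLp 2 (fun p : Fin K × Fin L × Fin M => T p.1 p.2.1 p.2.2)

/-- the parametrization map -/
def cpdPhi (B : Matrix (Fin L) (Fin R) ℝ) (A : Matrix (Fin K) (Fin R) ℝ)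
    (C : Matrix (Fin M) (Fin R) ℝ) : cpdE K L M :=
  WithLp.toLp 2 (fun p : Fin K × Fin L × Fin M => ∑ r, A p.1 r * B p.2.1 r * C p.2.2 r)

lemma cpdError_eq (T : Fin K → Fin L → Fin M → ℝ) (B : Matrix (Fin L) (Fin R) ℝ)
    (A : Matrix (Fin K) (Fin R) ℝ) (C : Matrix (Fin M) (Fin R) ℝ) :
    cpdError T B A C = dist (cpdT T) (cpdPhi B A C) ^ 2 := by
  rw [EuclideanSpace.dist_eq, Real.sq_sqrt (by positivity)]
  rw [cpdError]
  rw [Fintype.sum_prod_type]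
  refine Finset.sum_congr rfl fun k _ => ?_
  rw [Fintype.sum_prod_type]
  refine Finset.sum_congr rfl fun l _ => Finset.sum_congr rfl fun m _ => ?_
  rw [Real.dist_eq, sq_abs]
  rfl

lemma cpdPhi_mem (B : Matrix (Fin L) (Fin R) ℝ) (A : Matrix (Fin K) (Fin R) ℝ)
    (C : Matrix (Fin M) (Fin R) ℝ) :
    cpdPhi B A C ∈ (cpdL B) '' (cpdO K M R) := by
  refine ⟨WithLp.toLp 2 (fun p : Fin R × Fin K × Fin M => A p.2.1 p.1 * C p.2.2 p.1), fun r => ⟨fun k => A k r, fun m => C m r,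
    fun k m => rfl⟩, ?_⟩
  ext p
  simp only [cpdL, LinearMap.coe_mk, AddHom.coe_mk, cpdPhi, WithLp.ofLp_toLp]
  exact Finset.sum_congr rfl fun r _ => by ring

end aux

theorem cpd_fixed_B_infimum_attained {K L M R : ℕ}
    (T : Fin K → Fin L → Fin M → ℝ)
    (B : Matrix (Fin L) (Fin R) ℝ) (hB : B.rank = R) :
    ∃ (A : Matrix (Fin K) (Fin R) ℝ) (C : Matrix (Fin M) (Fin R) ℝ),
      ∀ (A' : Matrix (Fin K) (Fin R) ℝ) (C' : Matrix (Fin M) (Fin R) ℝ),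
        cpdError T B A C ≤ cpdError T B A' C' := by
  set S : Set (cpdE K L M) := (cpdL B) '' (cpdO K M R) with hS
  have hinj : Function.Injective (cpdL (K := K) (M := M) B) := cpdL_injective hB
  -- closed embedding
  have hclosed : IsClosed S := by
    obtain ⟨c, hc, hanti⟩ := (cpdL (K := K) (M := M) B).exists_antilipschitzWith
      (LinearMap.ker_eq_bot.mpr hinj)
    have hcont : Continuous (cpdL (K := K) (M := M) B) :=
      (cpdL B).continuous_of_finiteDimensional
    have huc : UniformContinuous (cpdL (K := K) (M := M) B) :=
      (LinearMap.toContinuousLinearMap (cpdL (K := K) (M := M) B)).uniformContinuous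
    exact (hanti.isClosedEmbedding huc).isClosedMap _ isClosed_cpdO
  have hne : S.Nonempty := ⟨cpdPhi B 0 0, cpdPhi_mem B 0 0⟩
  obtain ⟨y, hyS, hy⟩ := hclosed.exists_infDist_eq_dist hne (cpdT T)
  obtain ⟨X, hXO, hXy⟩ := hyS
  obtain ⟨A, C, hAC⟩ : ∃ (A : Matrix (Fin K) (Fin R) ℝ) (C : Matrix (Fin M) (Fin R) ℝ),
      cpdPhi B A C = y := by
    choose a c hac using hXO
    refine ⟨fun k r => a r k, fun m r => c r m, ?_⟩
    rw [← hXy]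
    ext p
    simp only [cpdPhi, cpdL, LinearMap.coe_mk, AddHom.coe_mk, WithLp.ofLp_toLp]
    exact Finset.sum_congr rfl fun r _ => by rw [hac r]; ring
  refine ⟨A, C, fun A' C' => ?_⟩
  rw [cpdError_eq, cpdError_eq, hAC]
  have h1 : dist (cpdT T) y ≤ dist (cpdT T) (cpdPhi B A' C') := by
    rw [← hy]
    exact Metric.infDist_le_dist_of_mem (cpdPhi_mem B A' C')
  exact pow_le_pow_left₀ dist_nonneg h1 2
end

section
/- Let A ∈ ℝ^{K×R} be a matrix whose every column has unit Euclidean norm, let B ∈ ℝ^{L×R}, and let σ ≥ 0 be such that ‖By‖₂ ≥ σ‖y‖₂ for all y ∈ ℝ^R. Then the Khatri-Rao product A ⊙ B satisfies ‖(A ⊙ B)x‖₂ ≥ σ‖x‖₂ for all x ∈ ℝ^R. In particular, the smallest singular value of A ⊙ B is at least the smallest singular value of B. -/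
open Matrix

/-- The Khatri-Rao (columnwise Kronecker) product. -/
def khatriRao {K L R : ℕ} (A : Matrix (Fin K) (Fin R) ℝ) (B : Matrix (Fin L) (Fin R) ℝ) :
    Matrix (Fin K × Fin L) (Fin R) ℝ :=
  fun p r => A p.1 r * B p.2 r

theorem khatriRao_smallest_singular_value {K L R : ℕ}
    (A : Matrix (Fin K) (Fin R) ℝ) (B : Matrix (Fin L) (Fin R) ℝ)
    (hA : ∀ r, ∑ k, (A k r) ^ 2 = 1)
    (σ : ℝ) (hσ : 0 ≤ σ)
    (hB : ∀ y : Fin R → ℝ,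
      σ * Real.sqrt (∑ r, (y r) ^ 2) ≤ Real.sqrt (∑ l, (B.mulVec y l) ^ 2)) :
    ∀ x : Fin R → ℝ,
      σ * Real.sqrt (∑ r, (x r) ^ 2) ≤
        Real.sqrt (∑ p : Fin K × Fin L, ((khatriRao A B).mulVec x p) ^ 2) := by
  intro x
  -- squared version of hB
  have hB2 : ∀ y : Fin R → ℝ,
      σ ^ 2 * ∑ r, (y r) ^ 2 ≤ ∑ l, (B.mulVec y l) ^ 2 := by
    intro y
    have h := hB y
    have h2 := pow_le_pow_left₀ (by positivity) h 2
    rwa [mul_pow, Real.sq_sqrt (by positivity), Real.sq_sqrt (by positivity)] at h2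
  have hS : ∑ p : Fin K × Fin L, ((khatriRao A B).mulVec x p) ^ 2
      = ∑ k, ∑ l, (B.mulVec (fun r => A k r * x r) l) ^ 2 := by
    rw [Fintype.sum_prod_type]
    refine Finset.sum_congr rfl fun k _ => Finset.sum_congr rfl fun l _ => ?_
    congr 1
    simp only [mulVec, dotProduct, khatriRao]
    exact Finset.sum_congr rfl fun r _ => by ring
  have key : σ ^ 2 * ∑ r, (x r) ^ 2
      ≤ ∑ p : Fin K × Fin L, ((khatriRao A B).mulVec x p) ^ 2 := by
    rw [hS]
    have h1 : (∑ k, σ ^ 2 * ∑ r, (A k r * x r) ^ 2)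
        = σ ^ 2 * ∑ r, (x r) ^ 2 := by
      simp only [← Finset.mul_sum]
      congr 1
      rw [Finset.sum_comm]
      refine Finset.sum_congr rfl fun r _ => ?_
      simp only [mul_pow]
      rw [← Finset.sum_mul, hA r, one_mul]
    rw [← h1]
    exact Finset.sum_le_sum fun k _ => hB2 _
  have hle : σ * Real.sqrt (∑ r, (x r) ^ 2)
      = Real.sqrt (σ ^ 2 * ∑ r, (x r) ^ 2) := by
    rw [Real.sqrt_mul (by positivity), Real.sqrt_sq hσ]
  rw [hle]
  exact Real.sqrt_le_sqrt key
end
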